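/- Suppose S is an orthogonal linear automorphism of 𝔤 and T is an orthogonal linear automorphism of V such that π(S X) = T ∘ π(X) ∘ T⁻¹ for all X ∈ 𝔤. Then the linear map (X,v) ↦ (S X, T v) is a Lie algebra automorphism of the Lauret algebra 𝔫(𝔤,V); equivalently, β(Tu, Tv) = S β(u,v) for all u,v ∈ V. (In the paper this is the statement that each element g of the group K = G′ × U acts on 𝔫 by the orthogonal automorphism (Ad(g), π(g)).) -/
import Mathlib


open scoped RealInnerProductSpace

/-- If `S` is an orthogonal automorphism of `𝔤` and `T` an orthogonal automorphism of `V`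
with `π(SX) = T ∘ π(X) ∘ T⁻¹`, then `(X,v) ↦ (SX, Tv)` is a Lie algebra automorphism of
the Lauret algebra; equivalently `β(Tu, Tv) = S β(u,v)`. -/
theorem lauret_orthogonal_automorphism
    {G V : Type*} [NormedAddCommGroup G] [InnerProductSpace ℝ G]
    [NormedAddCommGroup V] [InnerProductSpace ℝ V]
    [FiniteDimensional ℝ G] [FiniteDimensional ℝ V]
    (π : G →ₗ[ℝ] (V →ₗ[ℝ] V))
    (hskew : ∀ (X : G) (u v : V), ⟪π X u, v⟫ = - ⟪u, π X v⟫)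
    (β : V → V → G)
    (hβ : ∀ (u v : V) (X : G), ⟪β u v, X⟫ = ⟪π X u, v⟫)
    (bracket : (G × V) → (G × V) → (G × V))
    (hbracket : ∀ w₁ w₂ : G × V, bracket w₁ w₂ = (β w₁.2 w₂.2, 0))
    (S : G ≃ₗᵢ[ℝ] G) (T : V ≃ₗᵢ[ℝ] V)
    (hST : ∀ (X : G) (v : V), π (S X) v = T (π X (T.symm v))) :
    (∀ u v : V, β (T u) (T v) = S (β u v)) ∧
    (∀ w₁ w₂ : G × V,
      bracket (S w₁.1, T w₁.2) (S w₂.1, T w₂.2)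
        = (S (bracket w₁ w₂).1, T (bracket w₁ w₂).2)) := by

  have key : ∀ u v : V, β (T u) (T v) = S (β u v) := by
    intro u v
    apply ext_inner_right ℝ
    intro X
    have h1 : ⟪β (T u) (T v), X⟫ = ⟪π X (T u), T v⟫ := hβ _ _ _
    have h2 : π X (T u) = T (π (S.symm X) u) := by
      have := hST (S.symm X) (T u)
      simpa using this
    rw [h1, h2, T.inner_map_map]
    rw [← hβ u v (S.symm X)]
    calc ⟪β u v, S.symm X⟫ = ⟪S (β u v), S (S.symm X)⟫ := (S.inner_map_map _ _).symm
      _ = ⟪S (β u v), X⟫ := by rw [S.apply_symm_apply]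
  refine ⟨key, fun w₁ w₂ => ?_⟩
  rw [hbracket, hbracket]
  simp [key]
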